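/- If R_{X₁X₂}(D₁,D₂) = R_{X₁}(D₁) + R_{X₂}(D₂) − I(X₁;X₂), and W satisfies the constraint R_{X₁|W}(D₁) + R_{X₂|W}(D₂) + I(X₁,X₂;W) = R_{X₁X₂}(D₁,D₂), then I(X₁;X₂|W) = 0 (i.e., X₁ − W − X₂ is a Markov chain), and hence I(X₁,X₂;W) ≥ C(X₁,X₂). -/

import Mathlib

open scoped BigOperators

/-- Shannon entropy of a pmf on a finite alphabet (natural log). -/
noncomputable def ent {A : Type*} [Fintype A] (p : A → ℝ) : ℝ :=
  -∑ a, p a * Real.log (p a)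

/-- `p` is a probability mass function. -/
def IsPMF {A : Type*} [Fintype A] (p : A → ℝ) : Prop :=
  (∀ a, 0 ≤ p a) ∧ ∑ a, p a = 1

section RD

variable {𝒳 𝒴 𝒲 𝒳₁ 𝒳₂ 𝒴₁ 𝒴₂ : Type}
  [Fintype 𝒳] [Fintype 𝒴] [Fintype 𝒲] [Fintype 𝒳₁] [Fintype 𝒳₂]
  [Fintype 𝒴₁] [Fintype 𝒴₂]

/-- `I(X₁;X₂)` from a pair pmf. -/
noncomputable def miPair (p : 𝒳₁ × 𝒳₂ → ℝ) : ℝ :=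
  ent (fun x₁ => ∑ x₂, p (x₁, x₂)) + ent (fun x₂ => ∑ x₁, p (x₁, x₂)) - ent p

/-- `I(X₁,X₂;W)` from a triple pmf. -/
noncomputable def miXXW (q : 𝒳₁ × 𝒳₂ × 𝒲 → ℝ) : ℝ :=
  ent (fun u : 𝒳₁ × 𝒳₂ => ∑ w, q (u.1, u.2, w))
    + ent (fun w => ∑ x₁, ∑ x₂, q (x₁, x₂, w)) - ent q

/-- `I(X₁;X₂|W)` from a triple pmf. -/
noncomputable def cmiXXW (q : 𝒳₁ × 𝒳₂ × 𝒲 → ℝ) : ℝ :=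
  ent (fun u : 𝒳₁ × 𝒲 => ∑ x₂, q (u.1, x₂, u.2))
    + ent (fun u : 𝒳₂ × 𝒲 => ∑ x₁, q (x₁, u.1, u.2))
    - ent q - ent (fun w => ∑ x₁, ∑ x₂, q (x₁, x₂, w))

/-- The (marginal) rate distortion function `R_X(D)`. -/
noncomputable def RDmarg (p : 𝒳 → ℝ) (d : 𝒳 → 𝒴 → ℝ) (D : ℝ) : ℝ :=
  sInf {r : ℝ | ∃ q : 𝒳 × 𝒴 → ℝ, IsPMF q ∧
    (∀ x, (∑ y, q (x, y)) = p x) ∧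
    (∑ z, q z * d z.1 z.2) ≤ D ∧
    r = ent (fun x => ∑ y, q (x, y)) + ent (fun y => ∑ x, q (x, y)) - ent q}

/-- The joint rate distortion function `R_{X₁X₂}(D₁,D₂)`. -/
noncomputable def RDjoint (p : 𝒳₁ × 𝒳₂ → ℝ)
    (d₁ : 𝒳₁ → 𝒴₁ → ℝ) (d₂ : 𝒳₂ → 𝒴₂ → ℝ) (D₁ D₂ : ℝ) : ℝ :=
  sInf {r : ℝ | ∃ q : (𝒳₁ × 𝒳₂) × 𝒴₁ × 𝒴₂ → ℝ, IsPMF q ∧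
    (∀ x : 𝒳₁ × 𝒳₂, (∑ y₁, ∑ y₂, q (x, y₁, y₂)) = p x) ∧
    (∑ z, q z * d₁ z.1.1 z.2.1) ≤ D₁ ∧
    (∑ z, q z * d₂ z.1.2 z.2.2) ≤ D₂ ∧
    r = ent (fun x : 𝒳₁ × 𝒳₂ => ∑ y₁, ∑ y₂, q (x, y₁, y₂))
        + ent (fun y : 𝒴₁ × 𝒴₂ => ∑ x : 𝒳₁ × 𝒳₂, q (x, y.1, y.2)) - ent q}

/-- The conditional rate distortion function `R_{X|W}(D)`, for a given joint
pmf `pw` of `(X, W)`. -/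
noncomputable def RDcond (pw : 𝒳 × 𝒲 → ℝ) (d : 𝒳 → 𝒴 → ℝ) (D : ℝ) : ℝ :=
  sInf {r : ℝ | ∃ q : 𝒳 × 𝒲 × 𝒴 → ℝ, IsPMF q ∧
    (∀ x w, (∑ y, q (x, w, y)) = pw (x, w)) ∧
    (∑ z, q z * d z.1 z.2.2) ≤ D ∧
    -- r = I(X;Y|W) = H(X,W) + H(W,Y) − H(X,W,Y) − H(W)
    r = ent (fun u : 𝒳 × 𝒲 => ∑ y, q (u.1, u.2, y))
        + ent (fun v : 𝒲 × 𝒴 => ∑ x, q (x, v.1, v.2))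
        - ent q - ent (fun w => ∑ x, ∑ y, q (x, w, y))}

/-- The joint conditional rate distortion function `R_{X₁X₂|W}(D₁,D₂)`. -/
noncomputable def RDcond2 (pw : (𝒳₁ × 𝒳₂) × 𝒲 → ℝ)
    (d₁ : 𝒳₁ → 𝒴₁ → ℝ) (d₂ : 𝒳₂ → 𝒴₂ → ℝ) (D₁ D₂ : ℝ) : ℝ :=
  sInf {r : ℝ | ∃ q : (𝒳₁ × 𝒳₂) × 𝒲 × (𝒴₁ × 𝒴₂) → ℝ, IsPMF q ∧
    (∀ x w, (∑ y : 𝒴₁ × 𝒴₂, q (x, w, y)) = pw (x, w)) ∧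
    (∑ z, q z * d₁ z.1.1 z.2.2.1) ≤ D₁ ∧
    (∑ z, q z * d₂ z.1.2 z.2.2.2) ≤ D₂ ∧
    r = ent (fun u : (𝒳₁ × 𝒳₂) × 𝒲 => ∑ y : 𝒴₁ × 𝒴₂, q (u.1, u.2, y))
        + ent (fun v : 𝒲 × 𝒴₁ × 𝒴₂ => ∑ x : 𝒳₁ × 𝒳₂, q (x, v.1, v.2))
        - ent q - ent (fun w => ∑ x : 𝒳₁ × 𝒳₂, ∑ y : 𝒴₁ × 𝒴₂, q (x, w, y))}

/-- Wyner's common information of a pair. -/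
noncomputable def wynerC (p : 𝒳₁ × 𝒳₂ → ℝ) : ℝ :=
  sInf {r : ℝ | ∃ n : ℕ, ∃ q : 𝒳₁ × 𝒳₂ × Fin n → ℝ, IsPMF q ∧
    (∀ x₁ x₂, (∑ w, q (x₁, x₂, w)) = p (x₁, x₂)) ∧
    (∀ x₁ x₂ w, q (x₁, x₂, w) * (∑ a, ∑ b, q (a, b, w))
        = (∑ b, q (x₁, b, w)) * (∑ a, q (a, x₂, w))) ∧
    r = miXXW q}

/-- The minimum common message rate `C₃(D₁,D₂)` of the Gray–Wyner network at
sum rate `R_{X₁X₂}(D₁,D₂)` (the characterization of Theorem 3):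
`inf I(X₁,X₂;W)` subject to
`R_{X₁|W}(D₁) + R_{X₂|W}(D₂) + I(X₁,X₂;W) = R_{X₁X₂}(D₁,D₂)`. -/
noncomputable def C3 (p : 𝒳₁ × 𝒳₂ → ℝ)
    (d₁ : 𝒳₁ → 𝒴₁ → ℝ) (d₂ : 𝒳₂ → 𝒴₂ → ℝ) (D₁ D₂ : ℝ) : ℝ :=
  sInf {r : ℝ | ∃ n : ℕ, ∃ q : 𝒳₁ × 𝒳₂ × Fin n → ℝ, IsPMF q ∧
    (∀ x₁ x₂, (∑ w, q (x₁, x₂, w)) = p (x₁, x₂)) ∧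
    RDcond (fun u : 𝒳₁ × Fin n => ∑ x₂, q (u.1, x₂, u.2)) d₁ D₁
      + RDcond (fun u : 𝒳₂ × Fin n => ∑ x₁, q (x₁, u.1, u.2)) d₂ D₂
      + miXXW q = RDjoint p d₁ d₂ D₁ D₂ ∧
    r = miXXW q}

end RD

/-! Applying `R_{X|W}(D) ≥ R_X(D) − I(X;W)` to both sources and using the identity
`I(X₁;W) + I(X₂;W) + I(X₁;X₂|W) = I(X₁,X₂;W) + I(X₁;X₂)`, the two hypotheses leave
`I(X₁;X₂|W) ≤ 0`. Now `I(X₁;X₂|W)` is the relative entropy of `q` with respect to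
`q(x₁,w) q(x₂,w) / q(w)`, so Gibbs' inequality makes it nonnegative, and its equality case
gives the Markov factorization; `W` is then admissible in Wyner's common information.
The lower bound on `R_{X|W}` holds because for every conditional test channel
`I(X;Y|W) = I(X;Y) − I(X;W) + I(X;W|Y)`, where `I(X;Y) ≥ R_X(D)`. -/

open Finset Real InformationTheory

section Gibbs

lemma mul_log_div_sub_eq_mul_klFun (t : ℝ) {s : ℝ} (hs : s ≠ 0) :
    t * log (t / s) - (t - s) = s * klFun (t / s) := by
  rw [klFun_apply]
  field_simp
  ring

variable {t s : ℝ}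

lemma sub_le_mul_log_div (ht : 0 ≤ t) (hs : 0 ≤ s) (hst : s = 0 → t = 0) :
    t - s ≤ t * log (t / s) := by
  rcases hs.eq_or_lt with rfl | hs
  · simp [hst rfl]
  · have := mul_log_div_sub_eq_mul_klFun t hs.ne'
    nlinarith [klFun_nonneg (div_nonneg ht hs.le)]

lemma eq_of_mul_log_div_eq_sub (ht : 0 ≤ t) (hs : 0 ≤ s) (hst : s = 0 → t = 0)
    (h : t * log (t / s) = t - s) : t = s := by
  rcases hs.eq_or_lt with rfl | hs
  · exact hst rfl
  · have hkl : s * klFun (t / s) = 0 := by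
      rw [← mul_log_div_sub_eq_mul_klFun t hs.ne', h, sub_self]
    have := (klFun_eq_zero_iff (div_nonneg ht hs.le)).1
      ((mul_eq_zero.1 hkl).resolve_left hs.ne')
    rwa [div_eq_one_iff_eq hs.ne'] at this

variable {ι : Type*} [Fintype ι] {t s : ι → ℝ}

theorem sum_mul_log_div_nonneg (ht : ∀ i, 0 ≤ t i) (hs : ∀ i, 0 ≤ s i)
    (hst : ∀ i, s i = 0 → t i = 0) (hsum : ∑ i, s i ≤ ∑ i, t i) :
    0 ≤ ∑ i, t i * log (t i / s i) :=
  calc (0 : ℝ) ≤ ∑ i, (t i - s i) := by rw [sum_sub_distrib]; linarith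
    _ ≤ ∑ i, t i * log (t i / s i) :=
      sum_le_sum fun i _ => sub_le_mul_log_div (ht i) (hs i) (hst i)

theorem eq_of_sum_mul_log_div_eq_zero (ht : ∀ i, 0 ≤ t i) (hs : ∀ i, 0 ≤ s i)
    (hst : ∀ i, s i = 0 → t i = 0) (hsum : ∑ i, s i ≤ ∑ i, t i)
    (h : ∑ i, t i * log (t i / s i) = 0) : t = s := by
  have hgap_nonneg : ∀ i, 0 ≤ t i * log (t i / s i) - (t i - s i) := fun i =>
    sub_nonneg.2 (sub_le_mul_log_div (ht i) (hs i) (hst i))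
  have hgap : ∑ i, (t i * log (t i / s i) - (t i - s i)) = 0 := by
    refine le_antisymm ?_ (sum_nonneg fun i _ => hgap_nonneg i)
    rw [sum_sub_distrib, sum_sub_distrib, h]
    linarith
  funext i
  refine eq_of_mul_log_div_eq_sub (ht i) (hs i) (hst i) (sub_eq_zero.1 ?_)
  exact (sum_eq_zero_iff_of_nonneg fun j _ => hgap_nonneg j).1 hgap i (mem_univ i)

end Gibbs

section Bookkeeping

lemma sum_rotate {α β γ M : Type*} [Fintype α] [Fintype β] [Fintype γ] [AddCommMonoid M]
    (f : α → β → γ → M) :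
    ∑ a, ∑ b, ∑ c, f a b c = ∑ c, ∑ a, ∑ b, f a b c :=
  (sum_congr rfl fun _ _ => sum_comm).trans sum_comm

lemma ent_comp_equiv {α β : Type*} [Fintype α] [Fintype β] (p : β → ℝ) (e : α ≃ β) :
    ent (fun a => p (e a)) = ent p := by
  unfold ent
  rw [e.sum_comp (fun b => p b * log (p b))]

lemma IsPMF.comp_equiv {α β : Type*} [Fintype α] [Fintype β] {p : β → ℝ} (hp : IsPMF p)
    (e : α ≃ β) : IsPMF (fun a => p (e a)) :=
  ⟨fun _ => hp.1 _, (e.sum_comp p).trans hp.2⟩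

variable {A B C : Type} [Fintype A] [Fintype B] [Fintype C] {q : A × B × C → ℝ}

lemma IsPMF.sum_middle (hq : IsPMF q) : IsPMF (fun u : A × C => ∑ b, q (u.1, b, u.2)) := by
  refine ⟨fun _ => sum_nonneg fun _ _ => hq.1 _, ?_⟩
  rw [← hq.2]
  simp only [Fintype.sum_prod_type]
  exact sum_congr rfl fun _ _ => sum_comm

lemma IsPMF.sum_first (hq : IsPMF q) : IsPMF (fun u : B × C => ∑ a, q (a, u.1, u.2)) := by
  refine ⟨fun _ => sum_nonneg fun _ _ => hq.1 _, ?_⟩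
  rw [← hq.2]
  simp only [Fintype.sum_prod_type]
  exact sum_rotate fun b c a => q (a, b, c)

end Bookkeeping

section MarkovApprox

variable {A B C : Type} [Fintype A] [Fintype B]

/-- `q(a,c) q(b,c) / q(c)`: the distribution with the `(A,C)` and `(B,C)` marginals of `q`
under which `A − C − B` is a Markov chain. -/
noncomputable def markovApprox (q : A × B × C → ℝ) (z : A × B × C) : ℝ :=
  (∑ b, q (z.1, b, z.2.2)) * (∑ a, q (a, z.2.1, z.2.2)) / ∑ a, ∑ b, q (a, b, z.2.2)

variable {q : A × B × C → ℝ}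

lemma markovApprox_nonneg (hq : ∀ z, 0 ≤ q z) (z : A × B × C) : 0 ≤ markovApprox q z :=
  div_nonneg (mul_nonneg (sum_nonneg fun _ _ => hq _) (sum_nonneg fun _ _ => hq _))
    (sum_nonneg fun _ _ => sum_nonneg fun _ _ => hq _)

lemma marginals_pos_of_pos (hq : ∀ z, 0 ≤ q z) {a : A} {b : B} {c : C} (h : 0 < q (a, b, c)) :
    0 < ∑ b', q (a, b', c) ∧ 0 < ∑ a', q (a', b, c) ∧ 0 < ∑ a', ∑ b', q (a', b', c) := by
  have hAC : q (a, b, c) ≤ ∑ b', q (a, b', c) :=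
    single_le_sum (f := fun b' => q (a, b', c)) (fun _ _ => hq _) (mem_univ b)
  have hBC : q (a, b, c) ≤ ∑ a', q (a', b, c) :=
    single_le_sum (f := fun a' => q (a', b, c)) (fun _ _ => hq _) (mem_univ a)
  have hC : ∑ b', q (a, b', c) ≤ ∑ a', ∑ b', q (a', b', c) :=
    single_le_sum (f := fun a' => ∑ b', q (a', b', c)) (fun _ _ => sum_nonneg fun _ _ => hq _)
      (mem_univ a)
  exact ⟨h.trans_le hAC, h.trans_le hBC, (h.trans_le hAC).trans_le hC⟩

lemma eq_zero_of_markovApprox_eq_zero (hq : ∀ z, 0 ≤ q z) {z : A × B × C}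
    (h : markovApprox q z = 0) : q z = 0 := by
  obtain ⟨a, b, c⟩ := z
  by_contra hne
  obtain ⟨hAC, hBC, hC⟩ := marginals_pos_of_pos hq ((hq _).lt_of_ne (Ne.symm hne))
  exact (div_pos (mul_pos hAC hBC) hC).ne' h

lemma mul_log_div_markovApprox (hq : ∀ z, 0 ≤ q z) (z : A × B × C) :
    q z * log (q z / markovApprox q z)
      = q z * log (q z) + q z * log (∑ a', ∑ b', q (a', b', z.2.2))
        - q z * log (∑ b', q (z.1, b', z.2.2)) - q z * log (∑ a', q (a', z.2.1, z.2.2)) := by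
  obtain ⟨a, b, c⟩ := z
  rcases (hq (a, b, c)).eq_or_lt with h | h
  · simp [← h]
  obtain ⟨hAC, hBC, hC⟩ := marginals_pos_of_pos hq h
  rw [markovApprox, log_div h.ne' (by positivity), log_div (by positivity) hC.ne',
    log_mul hAC.ne' hBC.ne']
  ring

variable [Fintype C]

lemma sum_markovApprox : ∑ z, markovApprox q z = ∑ z, q z := by
  simp only [Fintype.sum_prod_type, markovApprox]
  rw [sum_rotate, sum_rotate fun a b c => q (a, b, c)]
  refine sum_congr rfl fun c _ => ?_
  simp only [← sum_div, ← sum_mul_sum]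
  rw [sum_comm (f := fun b a => q (a, b, c)), mul_self_div_self]

lemma cmiXXW_eq_sum_mul_log_div (hq : ∀ z, 0 ≤ q z) :
    cmiXXW q = ∑ z, q z * log (q z / markovApprox q z) := by
  have hC : ∑ z : A × B × C, q z * log (∑ a', ∑ b', q (a', b', z.2.2))
      = ∑ c, (∑ a', ∑ b', q (a', b', c)) * log (∑ a', ∑ b', q (a', b', c)) := by
    simp only [Fintype.sum_prod_type, sum_mul]
    rw [sum_rotate]
  have hAC : ∑ z : A × B × C, q z * log (∑ b', q (z.1, b', z.2.2))
      = ∑ u : A × C, (∑ b', q (u.1, b', u.2)) * log (∑ b', q (u.1, b', u.2)) := by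
    simp only [Fintype.sum_prod_type, sum_mul]
    exact sum_congr rfl fun _ _ => sum_comm
  have hBC : ∑ z : A × B × C, q z * log (∑ a', q (a', z.2.1, z.2.2))
      = ∑ u : B × C, (∑ a', q (a', u.1, u.2)) * log (∑ a', q (a', u.1, u.2)) := by
    simp only [Fintype.sum_prod_type, sum_mul]
    exact (sum_rotate _).symm
  simp only [mul_log_div_markovApprox hq, sum_sub_distrib, sum_add_distrib]
  rw [hC, hAC, hBC, cmiXXW, ent, ent, ent, ent]
  ring

lemma cmiXXW_nonneg (hq : IsPMF q) : 0 ≤ cmiXXW q := by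
  rw [cmiXXW_eq_sum_mul_log_div hq.1]
  exact sum_mul_log_div_nonneg hq.1 (markovApprox_nonneg hq.1)
    (fun _ => eq_zero_of_markovApprox_eq_zero hq.1) sum_markovApprox.le

lemma eq_markovApprox_of_cmiXXW_eq_zero (hq : IsPMF q) (h : cmiXXW q = 0) :
    q = markovApprox q :=
  eq_of_sum_mul_log_div_eq_zero hq.1 (markovApprox_nonneg hq.1)
    (fun _ => eq_zero_of_markovApprox_eq_zero hq.1) sum_markovApprox.le
    ((cmiXXW_eq_sum_mul_log_div hq.1).symm.trans h)

theorem markov_of_cmiXXW_eq_zero (hq : IsPMF q) (h : cmiXXW q = 0) (a : A) (b : B) (c : C) :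
    q (a, b, c) * (∑ a', ∑ b', q (a', b', c)) = (∑ b', q (a, b', c)) * (∑ a', q (a', b, c)) := by
  have hAC : ∑ b', q (a, b', c) ≤ ∑ a', ∑ b', q (a', b', c) :=
    single_le_sum (f := fun a' => ∑ b', q (a', b', c)) (fun _ _ => sum_nonneg fun _ _ => hq.1 _)
      (mem_univ a)
  rw [congrFun (eq_markovApprox_of_cmiXXW_eq_zero hq h) (a, b, c), markovApprox]
  refine div_mul_cancel_of_imp fun hC => ?_
  rw [le_antisymm (hC ▸ hAC) (sum_nonneg fun _ _ => hq.1 _), zero_mul]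

end MarkovApprox

section MutualInformation

variable {A B C : Type} [Fintype A] [Fintype B] [Fintype C]

lemma miPair_eq_cmiXXW {p : A × B → ℝ} (hp : ∑ z, p z = 1) :
    miPair p = cmiXXW (fun z : A × B × Unit => p (z.1, z.2.1)) := by
  have hA : ent (fun u : A × Unit => ∑ b, p (u.1, b)) = ent (fun a => ∑ b, p (a, b)) :=
    ent_comp_equiv (fun a => ∑ b, p (a, b)) (Equiv.prodPUnit A)
  have hB : ent (fun u : B × Unit => ∑ a, p (a, u.1)) = ent (fun b => ∑ a, p (a, b)) :=
    ent_comp_equiv (fun b => ∑ a, p (a, b)) (Equiv.prodPUnit B)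
  have hAB : ent (fun z : A × B × Unit => p (z.1, z.2.1)) = ent p :=
    ent_comp_equiv p ((Equiv.prodAssoc A B Unit).symm.trans (Equiv.prodPUnit _))
  have hUnit : ent (fun _ : Unit => ∑ a, ∑ b, p (a, b)) = 0 := by
    simp [ent, ← Fintype.sum_prod_type, hp]
  rw [miPair, cmiXXW, hA, hB, hAB, hUnit, sub_zero]

lemma miPair_nonneg {p : A × B → ℝ} (hp : IsPMF p) : 0 ≤ miPair p := by
  rw [miPair_eq_cmiXXW hp.2]
  exact cmiXXW_nonneg (hp.comp_equiv ((Equiv.prodAssoc A B Unit).symm.trans (Equiv.prodPUnit _)))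

lemma miXXW_eq_miPair (q : A × B × C → ℝ) :
    miXXW q = miPair (fun u : (A × B) × C => q (u.1.1, u.1.2, u.2)) := by
  have hC : ent (fun c => ∑ u : A × B, q (u.1, u.2, c)) = ent (fun c => ∑ a, ∑ b, q (a, b, c)) := by
    simp only [Fintype.sum_prod_type]
  have hABC : ent (fun u : (A × B) × C => q (u.1.1, u.1.2, u.2)) = ent q :=
    ent_comp_equiv q (Equiv.prodAssoc A B C)
  rw [miXXW, miPair, hC, hABC]

lemma miXXW_nonneg {q : A × B × C → ℝ} (hq : IsPMF q) : 0 ≤ miXXW q := by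
  rw [miXXW_eq_miPair]
  exact miPair_nonneg (hq.comp_equiv (Equiv.prodAssoc A B C))

/-- `I(A;C) + I(B;C) + I(A;B|C) = I(A,B;C) + I(A;B)`. -/
lemma miPair_add_miPair_add_cmiXXW (q : A × B × C → ℝ) :
    miPair (fun u : A × C => ∑ b, q (u.1, b, u.2)) + miPair (fun u : B × C => ∑ a, q (a, u.1, u.2))
        + cmiXXW q
      = miXXW q + miPair (fun u : A × B => ∑ c, q (u.1, u.2, c)) := by
  have hA : (fun a => ∑ c, ∑ b, q (a, b, c)) = fun a => ∑ b, ∑ c, q (a, b, c) :=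
    funext fun _ => sum_comm
  have hB : (fun b => ∑ c, ∑ a, q (a, b, c)) = fun b => ∑ a, ∑ c, q (a, b, c) :=
    funext fun _ => sum_comm
  have hC : (fun c => ∑ b, ∑ a, q (a, b, c)) = fun c => ∑ a, ∑ b, q (a, b, c) :=
    funext fun _ => sum_comm
  simp only [miPair, miXXW, cmiXXW]
  rw [hA, hB, hC]
  ring

/-- `I(A;C|B) = I(A;C) − I(A;B) + I(A;B|C)`, with `I(A;C|B)` written as in `RDcond`. -/
lemma RDcond_objective_eq (q : A × B × C → ℝ) :
    ent (fun u : A × B => ∑ c, q (u.1, u.2, c)) + ent (fun v : B × C => ∑ a, q (a, v.1, v.2))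
        - ent q - ent (fun b => ∑ a, ∑ c, q (a, b, c))
      = miPair (fun u : A × C => ∑ b, q (u.1, b, u.2)) - miPair (fun u : A × B => ∑ c, q (u.1, u.2, c))
        + cmiXXW q := by
  have hA : (fun a => ∑ c, ∑ b, q (a, b, c)) = fun a => ∑ b, ∑ c, q (a, b, c) :=
    funext fun _ => sum_comm
  simp only [miPair, cmiXXW]
  rw [hA]
  ring

end MutualInformation

section RateDistortion

variable {X W Y : Type} [Fintype X] [Fintype W] [Fintype Y] {d : X → Y → ℝ} {D : ℝ}

def IsTestChannel (p : X → ℝ) (d : X → Y → ℝ) (D : ℝ) (q : X × Y → ℝ) : Prop :=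
  IsPMF q ∧ (∀ x, ∑ y, q (x, y) = p x) ∧ ∑ z, q z * d z.1 z.2 ≤ D

def IsCondTestChannel (pw : X × W → ℝ) (d : X → Y → ℝ) (D : ℝ) (q : X × W × Y → ℝ) : Prop :=
  IsPMF q ∧ (∀ x w, ∑ y, q (x, w, y) = pw (x, w)) ∧ ∑ z, q z * d z.1 z.2.2 ≤ D

lemma RDmarg_le_miPair {p : X → ℝ} {q : X × Y → ℝ} (hq : IsTestChannel p d D q) :
    RDmarg p d D ≤ miPair q :=
  csInf_le ⟨0, by rintro _ ⟨q, hq, -, -, rfl⟩; exact miPair_nonneg hq⟩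
    ⟨q, hq.1, hq.2.1, hq.2.2, rfl⟩

lemma RDmarg_eq_zero {p : X → ℝ} (h : ∀ q, ¬ IsTestChannel p d D q) : RDmarg p d D = 0 := by
  rw [RDmarg]
  convert Real.sInf_empty
  refine Set.eq_empty_of_forall_notMem ?_
  rintro _ ⟨q, hq, hm, hd, -⟩
  exact h q ⟨hq, hm, hd⟩

lemma RDcond_eq_zero {pw : X × W → ℝ} (h : ∀ q, ¬ IsCondTestChannel pw d D q) :
    RDcond pw d D = 0 := by
  rw [RDcond]
  convert Real.sInf_empty
  refine Set.eq_empty_of_forall_notMem ?_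
  rintro _ ⟨q, hq, hm, hd, -⟩
  exact h q ⟨hq, hm, hd⟩

lemma IsCondTestChannel.marginal {pw : X × W → ℝ} {q : X × W × Y → ℝ}
    (hq : IsCondTestChannel pw d D q) :
    IsTestChannel (fun x => ∑ w, pw (x, w)) d D (fun u => ∑ w, q (u.1, w, u.2)) := by
  obtain ⟨hpmf, hm, hd⟩ := hq
  refine ⟨hpmf.sum_middle, fun x => ?_, ?_⟩
  · rw [sum_comm]
    exact sum_congr rfl fun w _ => hm x w
  · refine le_trans (le_of_eq ?_) hd
    simp only [Fintype.sum_prod_type, sum_mul]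
    exact sum_congr rfl fun _ _ => sum_comm

/-- The extension draws `Y` from `q(· | x)` independently of `W`. -/
lemma IsTestChannel.extend {pw : X × W → ℝ} (hpw : IsPMF pw) {q : X × Y → ℝ}
    (hq : IsTestChannel (fun x => ∑ w, pw (x, w)) d D q) :
    IsCondTestChannel pw d D (fun z => pw (z.1, z.2.1) * q (z.1, z.2.2) / ∑ w, pw (z.1, w)) := by
  obtain ⟨hpmf, hm, hd⟩ := hq
  replace hm : ∀ x, ∑ y, q (x, y) = ∑ w, pw (x, w) := hm
  have hpw_zero : ∀ x w, ∑ w', pw (x, w') = 0 → pw (x, w) = 0 := fun x w h =>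
    (sum_eq_zero_iff_of_nonneg fun _ _ => hpw.1 _).1 h w (mem_univ w)
  have hq_zero : ∀ x y, ∑ w', pw (x, w') = 0 → q (x, y) = 0 := fun x y h =>
    (sum_eq_zero_iff_of_nonneg fun _ _ => hpmf.1 _).1 ((hm x).trans h) y (mem_univ y)
  have hXW : ∀ x w, ∑ y, pw (x, w) * q (x, y) / ∑ w', pw (x, w') = pw (x, w) := fun x w => by
    rw [← sum_div, ← mul_sum, hm, mul_div_cancel_of_imp (hpw_zero x w)]
  have hXY : ∀ x y, ∑ w, pw (x, w) * q (x, y) / ∑ w', pw (x, w') = q (x, y) := fun x y => by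
    rw [← sum_div, ← sum_mul, mul_div_cancel_left_of_imp (hq_zero x y)]
  refine ⟨⟨fun _ => div_nonneg (mul_nonneg (hpw.1 _) (hpmf.1 _))
    (sum_nonneg fun _ _ => hpw.1 _), ?_⟩, hXW, ?_⟩
  · simp only [Fintype.sum_prod_type, hXW]
    rw [← hpw.2, Fintype.sum_prod_type]
  · refine le_trans (le_of_eq ?_) hd
    simp only [Fintype.sum_prod_type]
    refine sum_congr rfl fun x _ => ?_
    rw [sum_comm]
    exact sum_congr rfl fun y _ => by rw [← sum_mul, hXY]

/-- By `marginal` and `extend` the two infima range over sets that are empty simultaneously,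
which is where the junk value `sInf ∅ = 0` is harmless. -/
theorem RDmarg_sub_miPair_le_RDcond {pw : X × W → ℝ} (hpw : IsPMF pw) :
    RDmarg (fun x => ∑ w, pw (x, w)) d D - miPair pw ≤ RDcond pw d D := by
  by_cases hex : ∃ q, IsTestChannel (fun x => ∑ w, pw (x, w)) d D q
  · obtain ⟨q, hq⟩ := hex
    obtain ⟨hpmf, hm, hd⟩ := hq.extend hpw
    refine le_csInf ⟨_, _, hpmf, hm, hd, rfl⟩ ?_
    rintro _ ⟨q', hpmf', hm', hd', rfl⟩
    have hXW : (fun u : X × W => ∑ y, q' (u.1, u.2, y)) = pw := funext fun u => hm' u.1 u.2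
    rw [RDcond_objective_eq, hXW]
    linarith [RDmarg_le_miPair (IsCondTestChannel.marginal ⟨hpmf', hm', hd'⟩),
      cmiXXW_nonneg hpmf']
  · have hcond : ∀ q, ¬ IsCondTestChannel pw d D q := fun q hq => hex ⟨_, hq.marginal⟩
    rw [RDmarg_eq_zero (not_exists.1 hex), RDcond_eq_zero hcond]
    linarith [miPair_nonneg hpw]

end RateDistortion

theorem markov_of_rd_constraint_general {𝒳₁ 𝒳₂ 𝒴₁ 𝒴₂ : Type}
    [Fintype 𝒳₁] [Fintype 𝒳₂] [Fintype 𝒴₁] [Fintype 𝒴₂]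
    (p : 𝒳₁ × 𝒳₂ → ℝ)
    (d₁ : 𝒳₁ → 𝒴₁ → ℝ) (d₂ : 𝒳₂ → 𝒴₂ → ℝ) (D₁ D₂ : ℝ)
    (hRD : RDjoint p d₁ d₂ D₁ D₂
        = RDmarg (fun x₁ => ∑ x₂, p (x₁, x₂)) d₁ D₁
          + RDmarg (fun x₂ => ∑ x₁, p (x₁, x₂)) d₂ D₂ - miPair p)
    (n : ℕ) (q : 𝒳₁ × 𝒳₂ × Fin n → ℝ) (hq : IsPMF q)
    (hmarg : ∀ x₁ x₂, (∑ w, q (x₁, x₂, w)) = p (x₁, x₂))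
    (hcon : RDcond (fun u : 𝒳₁ × Fin n => ∑ x₂, q (u.1, x₂, u.2)) d₁ D₁
        + RDcond (fun u : 𝒳₂ × Fin n => ∑ x₁, q (x₁, u.1, u.2)) d₂ D₂
        + miXXW q = RDjoint p d₁ d₂ D₁ D₂) :
    cmiXXW q = 0 ∧ wynerC p ≤ miXXW q := by
  have hX₁ : (fun x₁ => ∑ w, ∑ x₂, q (x₁, x₂, w)) = fun x₁ => ∑ x₂, p (x₁, x₂) :=
    funext fun x₁ => by rw [sum_comm]; simp only [hmarg]
  have hX₂ : (fun x₂ => ∑ w, ∑ x₁, q (x₁, x₂, w)) = fun x₂ => ∑ x₁, p (x₁, x₂) :=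
    funext fun x₂ => by rw [sum_comm]; simp only [hmarg]
  have hX₁X₂ : (fun u : 𝒳₁ × 𝒳₂ => ∑ w, q (u.1, u.2, w)) = p := funext fun u => hmarg u.1 u.2
  have hR₁ := RDmarg_sub_miPair_le_RDcond (d := d₁) (D := D₁) hq.sum_middle
  have hR₂ := RDmarg_sub_miPair_le_RDcond (d := d₂) (D := D₂) hq.sum_first
  have hchain := miPair_add_miPair_add_cmiXXW q
  simp only [hX₁, hX₂] at hR₁ hR₂
  rw [hX₁X₂] at hchain
  have hcmi : cmiXXW q = 0 := le_antisymm (by linarith) (cmiXXW_nonneg hq)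
  refine ⟨hcmi, csInf_le ⟨0, ?_⟩ ⟨n, q, hq, hmarg, markov_of_cmiXXW_eq_zero hq hcmi, rfl⟩⟩
  rintro _ ⟨m, q', hq', -, -, rfl⟩
  exact miXXW_nonneg hq'

/-- If `R_{X₁X₂}(D₁,D₂) = R_{X₁}(D₁) + R_{X₂}(D₂) − I(X₁;X₂)` and `W` satisfies
the constraint `R_{X₁|W}(D₁) + R_{X₂|W}(D₂) + I(X₁,X₂;W) = R_{X₁X₂}(D₁,D₂)`,
then `I(X₁;X₂|W) = 0` (Markov chain `X₁ − W − X₂`), and hence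
`I(X₁,X₂;W) ≥ C(X₁,X₂)`. -/
theorem markov_of_rd_constraint {𝒳₁ 𝒳₂ 𝒴₁ 𝒴₂ : Type}
    [Fintype 𝒳₁] [Fintype 𝒳₂] [Fintype 𝒴₁] [Fintype 𝒴₂]
    (p : 𝒳₁ × 𝒳₂ → ℝ) (hp : IsPMF p)
    (d₁ : 𝒳₁ → 𝒴₁ → ℝ) (d₂ : 𝒳₂ → 𝒴₂ → ℝ) (D₁ D₂ : ℝ)
    (hRD : RDjoint p d₁ d₂ D₁ D₂
        = RDmarg (fun x₁ => ∑ x₂, p (x₁, x₂)) d₁ D₁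
          + RDmarg (fun x₂ => ∑ x₁, p (x₁, x₂)) d₂ D₂ - miPair p)
    (n : ℕ) (q : 𝒳₁ × 𝒳₂ × Fin n → ℝ) (hq : IsPMF q)
    (hmarg : ∀ x₁ x₂, (∑ w, q (x₁, x₂, w)) = p (x₁, x₂))
    (hcon : RDcond (fun u : 𝒳₁ × Fin n => ∑ x₂, q (u.1, x₂, u.2)) d₁ D₁
        + RDcond (fun u : 𝒳₂ × Fin n => ∑ x₁, q (x₁, u.1, u.2)) d₂ D₂
        + miXXW q = RDjoint p d₁ d₂ D₁ D₂) :
    cmiXXW q = 0 ∧ wynerC p ≤ miXXW q :=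
  markov_of_rd_constraint_general p d₁ d₂ D₁ D₂ hRD n q hq hmarg hcon
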